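/- For any rack X, the congruence Q_X permutes with any reflexive internal (compatible) relation R on X: Q_X ∘ R = R ∘ Q_X. -/

import Mathlib

/-- A rack: a set with operations `◁`, `◁⁻¹` satisfying (R1) and (R2). -/
class PaperRack (X : Type*) where
  act : X → X → X
  inv : X → X → X
  r1a : ∀ x y, inv (act x y) y = x
  r1b : ∀ x y, act (inv x y) y = x
  r2 : ∀ x y z, act (act x y) z = act (act x z) (act y z)

infixl:70 " ◁ " => PaperRack.act
infixl:70 " ◁⁻¹ " => PaperRack.inv

/-- `y ◁^n y` for a natural number `n`. -/
def selfIterPos {X : Type*} [PaperRack X] (y : X) : ℕ → X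
  | 0 => y
  | n + 1 => selfIterPos y n ◁ selfIterPos y n

/-- `y ◁^k y` for an integer `k` (using `◁⁻¹` when `k < 0`, with `y ◁^0 y = y`). -/
def selfIter {X : Type*} [PaperRack X] (y : X) : ℤ → X
  | Int.ofNat n => selfIterPos y n
  | Int.negSucc n =>
      (fun m => Nat.rec (motive := fun _ => X) (y ◁⁻¹ y)
        (fun _ z => z ◁⁻¹ z) m) n

/-- The congruence `Q_X`: `(x, y) ∈ Q_X` iff `x = y ◁^k y` for some integer `k`. -/
def QX {X : Type*} [PaperRack X] (x y : X) : Prop :=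
  ∃ k : ℤ, x = selfIter y k

/-!
Since `x ↦ x ◁ x` is a permutation `σ` with `y ◁^k y = σ^k y`, `Q_X` is the orbit relation of the
cyclic group `⟨σ⟩`, and a compatible relation is `⟨σ⟩`-invariant. For any group action, the orbit
relation permutes with an invariant relation `R`: from `R a c` and `c = g • b` one gets
`R (g⁻¹ • a) b` with `a = g • (g⁻¹ • a)`.
-/

theorem exists_smul_eq_and_iff_exists_and_smul_eq {G X : Type*} [Group G] [MulAction G X]
    {R : X → X → Prop} (hR : ∀ (g : G) {x y : X}, R x y → R (g • x) (g • y)) (a b : X) :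
    (∃ c, (∃ g : G, g • c = a) ∧ R c b) ↔ ∃ c, R a c ∧ ∃ g : G, g • b = c := by
  constructor
  · rintro ⟨c, ⟨g, rfl⟩, hcb⟩
    exact ⟨g • b, hR g hcb, g, rfl⟩
  · rintro ⟨c, hac, g, rfl⟩
    refine ⟨g⁻¹ • a, ⟨g, smul_inv_smul g a⟩, ?_⟩
    simpa using hR g⁻¹ hac

namespace PaperRack

variable {X : Type*} [PaperRack X]

theorem act_left_injective (y : X) : Function.Injective (· ◁ y) :=
  Function.LeftInverse.injective (g := (· ◁⁻¹ y)) fun x => r1a x y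

theorem inv_self_act (x y : X) : (x ◁ y) ◁⁻¹ (x ◁ y) = (x ◁⁻¹ x) ◁ y := by
  have h := r2 (x ◁⁻¹ x) x y
  rw [r1b] at h
  conv_rhs => rw [← r1a ((x ◁⁻¹ x) ◁ y) (x ◁ y), ← h]

theorem inv_self_act_self (x : X) : (x ◁ x) ◁⁻¹ (x ◁ x) = x := by
  rw [inv_self_act, r1b]

theorem act_self_inv_self (x : X) : (x ◁⁻¹ x) ◁ (x ◁⁻¹ x) = x := by
  apply act_left_injective x
  simpa only [r1b] using r2 (x ◁⁻¹ x) (x ◁⁻¹ x) x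

variable (X) in
def selfAct : Equiv.Perm X where
  toFun x := x ◁ x
  invFun x := x ◁⁻¹ x
  left_inv := inv_self_act_self
  right_inv := act_self_inv_self

theorem selfIterPos_eq_pow (y : X) (n : ℕ) : selfIterPos y n = (selfAct X ^ n) y := by
  induction n with
  | zero => rfl
  | succ n ih => rw [pow_succ', Equiv.Perm.mul_apply, ← ih]; rfl

theorem selfIter_eq_zpow (y : X) (k : ℤ) : selfIter y k = (selfAct X ^ k) y := by
  cases k with
  | ofNat n => exact selfIterPos_eq_pow y n
  | negSucc n =>
    rw [zpow_negSucc, ← inv_pow]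
    induction n with
    | zero => rfl
    | succ n ih => rw [pow_succ', Equiv.Perm.mul_apply, ← ih]; rfl

theorem qx_iff_exists_zpowers_smul (x y : X) :
    QX x y ↔ ∃ g : Subgroup.zpowers (selfAct X), g • y = x := by
  simp only [QX, selfIter_eq_zpow, Subgroup.exists_zpowers, Subgroup.smul_def,
    Equiv.Perm.smul_def, eq_comm]

theorem rel_selfIter {R : X → X → Prop}
    (hact : ∀ x y u v, R x y → R u v → R (x ◁ u) (y ◁ v))
    (hinv : ∀ x y u v, R x y → R u v → R (x ◁⁻¹ u) (y ◁⁻¹ v))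
    (k : ℤ) {x y : X} (h : R x y) : R (selfIter x k) (selfIter y k) := by
  cases k with
  | ofNat n =>
    induction n with
    | zero => exact h
    | succ n ih => exact hact _ _ _ _ ih ih
  | negSucc n =>
    induction n with
    | zero => exact hinv _ _ _ _ h h
    | succ n ih => exact hinv _ _ _ _ ih ih

end PaperRack

open PaperRack in
theorem QX_permutes_general {X : Type*} [PaperRack X] (R : X → X → Prop)
    (hact : ∀ x y u v, R x y → R u v → R (x ◁ u) (y ◁ v))
    (hinv : ∀ x y u v, R x y → R u v → R (x ◁⁻¹ u) (y ◁⁻¹ v)) :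
    ∀ a b : X, (∃ c, QX a c ∧ R c b) ↔ (∃ c, R a c ∧ QX c b) := by
  intro a b
  simp only [qx_iff_exists_zpowers_smul]
  refine exists_smul_eq_and_iff_exists_and_smul_eq (fun g x y hxy => ?_) a b
  obtain ⟨k, hk⟩ := Subgroup.mem_zpowers_iff.mp g.2
  simpa only [Subgroup.smul_def, Equiv.Perm.smul_def, ← hk, ← selfIter_eq_zpow]
    using rel_selfIter hact hinv k hxy

/-- `Q_X` permutes with every reflexive compatible relation `R` on a rack `X`:
`Q_X ∘ R = R ∘ Q_X` (where `(a,b) ∈ Q_X ∘ R` iff `∃ c, (a,c) ∈ Q_X ∧ (c,b) ∈ R`). -/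
theorem QX_permutes {X : Type*} [PaperRack X] (R : X → X → Prop)
    (hrefl : ∀ x, R x x)
    (hact : ∀ x y u v, R x y → R u v → R (x ◁ u) (y ◁ v))
    (hinv : ∀ x y u v, R x y → R u v → R (x ◁⁻¹ u) (y ◁⁻¹ v)) :
    ∀ a b : X, (∃ c, QX a c ∧ R c b) ↔ (∃ c, R a c ∧ QX c b) :=
  QX_permutes_general R hact hinv
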